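/- arXiv:1712.10097 — 3 statements merged into one kernel-verified Lean document; each statement's English description precedes it below -/
import Mathlib

section
/- The per-sensor objective of Problem P2, namely the function t ↦ a·log(1 + (T−t)/β) − c·[α·(T−t)/(η·β·h) + (t/(η·h²))·f((T−t)/(R·β·t))], is strictly concave on the open interval (0, T). -/
/-!
The log term is `log` composed with the injective affine map `t ↦ 1 + (T - t)/β`, hence strictly
concave. For `t > 0` the cost in brackets equals `t · ψ(T/t - 1)` with
`ψ(v) = α v/(η β h) + (N₀/(η h²)) (2^{v/(R β B)} - 1)` convex, so it is a perspective of a convex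
function and therefore convex. Strictly concave minus convex is strictly concave.
-/

open Real Set

theorem StrictConcaveOn.const_mul {𝕜 E : Type*} [Field 𝕜] [LinearOrder 𝕜] [IsStrictOrderedRing 𝕜]
    [AddCommGroup E] [Module 𝕜 E] {s : Set E} {f : E → 𝕜} {c : 𝕜}
    (hc : 0 < c) (hf : StrictConcaveOn 𝕜 s f) : StrictConcaveOn 𝕜 s fun x => c * f x :=
  ⟨hf.1, fun x hx y hy hxy a b ha hb hab => by
    simpa only [smul_eq_mul, mul_add, mul_left_comm c] using
      mul_lt_mul_of_pos_left (hf.2 hx hy hxy ha hb hab) hc⟩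

theorem StrictConcaveOn.comp_affineMap {𝕜 E F β : Type*} [Ring 𝕜] [PartialOrder 𝕜]
    [AddCommGroup E] [AddCommGroup F] [AddCommMonoid β] [PartialOrder β]
    [Module 𝕜 E] [Module 𝕜 F] [SMul 𝕜 β] {f : F → β} {s : Set F}
    (hf : StrictConcaveOn 𝕜 s f) (g : E →ᵃ[𝕜] F) (hg : Function.Injective g) :
    StrictConcaveOn 𝕜 (g ⁻¹' s) (f ∘ g) :=
  ⟨hf.1.affine_preimage g, fun x hx y hy hxy a b ha hb hab =>
    calc
      a • f (g x) + b • f (g y) < f (a • g x + b • g y) := hf.2 hx hy (hg.ne hxy) ha hb hab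
      _ = (f ∘ g) (a • x + b • y) := by rw [Function.comp_apply, Convex.combo_affine_apply hab]⟩

theorem ConvexOn.perspective {E : Type*} [AddCommGroup E] [Module ℝ E] {φ : E → ℝ}
    (hφ : ConvexOn ℝ univ φ) (x : E) :
    ConvexOn ℝ (Ioi 0) fun t => t * φ (t⁻¹ • x) := by
  refine ⟨convex_Ioi 0, fun t (ht : 0 < t) s (hs : 0 < s) a b ha hb hab => ?_⟩
  have hz : 0 < a * t + b * s := convex_Ioi (0 : ℝ) ht hs ha hb hab
  set z := a * t + b * s
  have hweights : a * t / z + b * s / z = 1 := by rw [← add_div, div_self hz.ne']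
  have hcombo : (a * t / z) • (t⁻¹ • x) + (b * s / z) • (s⁻¹ • x) = z⁻¹ • x := by
    rw [smul_smul, smul_smul, ← add_smul]
    congr 1
    field_simp
    exact hab
  have key := hφ.2 (mem_univ (t⁻¹ • x)) (mem_univ (s⁻¹ • x)) (by positivity) (by positivity)
    hweights
  rw [hcombo, smul_eq_mul, smul_eq_mul] at key
  show z * φ (z⁻¹ • x) ≤ a * (t * φ (t⁻¹ • x)) + b * (s * φ (s⁻¹ • x))
  calc z * φ (z⁻¹ • x) ≤ z * (a * t / z * φ (t⁻¹ • x) + b * s / z * φ (s⁻¹ • x)) :=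
        mul_le_mul_of_nonneg_left key hz.le
    _ = a * (t * φ (t⁻¹ • x)) + b * (s * φ (s⁻¹ • x)) := by field_simp

theorem strictConcaveOn_log_one_add_sub_div {β : ℝ} (T : ℝ) (hβ : 0 < β) :
    StrictConcaveOn ℝ (Iio (T + β)) fun t => log (1 + (T - t) / β) := by
  let g : ℝ →ᵃ[ℝ] ℝ := AffineMap.const ℝ ℝ (1 + T / β) - β⁻¹ • AffineMap.id ℝ ℝ
  have hg : ∀ t, g t = 1 + (T - t) / β := fun t => by
    simp only [g, AffineMap.coe_sub, AffineMap.coe_const, AffineMap.coe_smul, AffineMap.coe_id,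
      Pi.sub_apply, Function.const_apply, Pi.smul_apply, id_eq, smul_eq_mul]
    ring
  have hinj : Function.Injective g := fun t s hts => by
    rw [hg, hg] at hts
    field_simp at hts
    linarith
  have hdom : Iio (T + β) ⊆ g ⁻¹' Ioi 0 := fun t (ht : t < T + β) => by
    rw [mem_preimage, hg, mem_Ioi, ← div_self hβ.ne', ← add_div]
    exact div_pos (by linarith) hβ
  refine ((strictConcaveOn_log_Ioi.comp_affineMap g hinj).subset hdom (convex_Iio _)).congr ?_
  intro t _
  simp only [Function.comp_apply, hg]

theorem convexOn_cost {N0 B α β h R η : ℝ} (T : ℝ) (hN0 : 0 ≤ N0) (hη : 0 ≤ η) :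
    ConvexOn ℝ (Ioi 0) fun t : ℝ =>
      α * (T - t) / (η * β * h)
        + (t / (η * h ^ 2)) * (N0 * ((2 : ℝ) ^ ((T - t) / (R * β * t) / B) - 1)) := by
  set p := α / (η * β * h)
  set q := N0 / (η * h ^ 2)
  set κ := (R * β * B)⁻¹
  have hψ : ConvexOn ℝ univ fun v : ℝ => p * v + q * ((2 : ℝ) ^ (κ * v) - 1) :=
    ((LinearMap.mul ℝ ℝ p).convexOn convex_univ).add
      ((((convexOn_rpow_left two_pos).comp_linearMap (LinearMap.mul ℝ ℝ κ)).add_const (-1)).smul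
        (by positivity))
  refine ((hψ.translate_right (-1)).perspective T).congr fun t (ht : 0 < t) => ?_
  have hexp : κ * (-1 + t⁻¹ • T) = (T - t) / (R * β * t) / B := by
    simp only [κ, smul_eq_mul]
    field_simp
    ring
  simp only [Function.comp_apply, hexp, p, q]
  rw [smul_eq_mul]
  field_simp
  ring

theorem objective_strictly_concave_general
    (N0 B a c α β h R η T : ℝ)
    (hN0 : 0 < N0) (ha : 0 < a) (hc : 0 < c)
    (hβ : 0 < β) (hη : 0 < η) :
    StrictConcaveOn ℝ (Ioo 0 T)
      (fun t : ℝ =>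
        a * Real.log (1 + (T - t) / β)
          - c * (α * (T - t) / (η * β * h)
            + (t / (η * h ^ 2)) * (N0 * ((2 : ℝ) ^ ((T - t) / (R * β * t) / B) - 1)))) := by
  have hlog : StrictConcaveOn ℝ (Ioo 0 T) fun t => a * log (1 + (T - t) / β) :=
    ((strictConcaveOn_log_one_add_sub_div T hβ).const_mul ha).subset
      (fun t ht => show t < T + β by linarith [ht.2]) (convex_Ioo 0 T)
  exact hlog.sub_convexOn
    (((convexOn_cost T hN0.le hη.le).subset Ioo_subset_Ioi_self (convex_Ioo 0 T)).smul hc.le)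

/-- The per-sensor objective of Problem P2,
`t ↦ a log(1 + (T−t)/β) − c [α (T−t)/(η β h) + (t/(η h²)) f((T−t)/(R β t))]`, with
`f(x) = N₀ (2^{x/B} − 1)`, is strictly concave on `(0, T)`. -/
theorem objective_strictly_concave
    (N0 B a c α β h R η T : ℝ)
    (hN0 : 0 < N0) (hB : 0 < B) (ha : 0 < a) (hc : 0 < c) (hα : 0 < α)
    (hβ : 0 < β) (hh : 0 < h) (hR : 0 < R) (hη : 0 < η) (hT : 0 < T) :
    StrictConcaveOn ℝ (Ioo 0 T)
      (fun t : ℝ =>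
        a * Real.log (1 + (T - t) / β)
          - c * (α * (T - t) / (η * β * h)
            + (t / (η * h ^ 2)) * (N0 * ((2 : ℝ) ^ ((T - t) / (R * β * t) / B) - 1)))) :=
  objective_strictly_concave_general N0 B a c α β h R η T hN0 ha hc hβ hη
end

section
/- For every t ∈ (0, T), the second derivative of the transmission-energy function t ↦ (t/(η·h²))·N₀·(2^{(T−t)/(B·R·β·t)} − 1) equals N₀·(T·ln 2)²/(η·(h·B·R·β)²·t³) · 2^{(T−t)/(B·R·β·t)}; in particular it is strictly positive on (0, T). -/
open Real Set

/-! Writing `2 ^ ((T - s) / (c s)) = 2 ^ (-1 / c) · exp (k / s)` with `c = B R β` and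
`k = T log 2 / c`, the energy is a combination of `s ↦ s · exp (k / s)` and a linear term,
and `(s · exp (k / s))'' = k² / s³ · exp (k / s)`. -/

lemma hasDerivAt_const_div (k : ℝ) {x : ℝ} (hx : x ≠ 0) :
    HasDerivAt (fun y => k / y) (-k / x ^ 2) x := by
  simpa using (hasDerivAt_const x k).fun_div (hasDerivAt_id' x) hx

lemma hasDerivAt_mul_exp_div (k : ℝ) {x : ℝ} (hx : x ≠ 0) :
    HasDerivAt (fun y => y * exp (k / y)) ((1 - k / x) * exp (k / x)) x := by
  refine ((hasDerivAt_id' x).fun_mul (hasDerivAt_const_div k hx).exp).congr_deriv ?_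
  field_simp
  ring

lemma hasDerivAt_one_sub_div_mul_exp_div (k : ℝ) {x : ℝ} (hx : x ≠ 0) :
    HasDerivAt (fun y => (1 - k / y) * exp (k / y)) (k ^ 2 / x ^ 3 * exp (k / x)) x := by
  have hdiv := hasDerivAt_const_div k hx
  refine ((hdiv.const_sub 1).fun_mul hdiv.exp).congr_deriv ?_
  field_simp
  ring

lemma deriv_deriv_mul_exp_div_sub (p q k : ℝ) {x : ℝ} (hx : x ≠ 0) :
    deriv (deriv fun y => p * (y * exp (k / y)) - q * y) x
      = p * (k ^ 2 / x ^ 3 * exp (k / x)) := by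
  have hderiv : deriv (fun y => p * (y * exp (k / y)) - q * y)
      =ᶠ[nhds x] fun y => p * ((1 - k / y) * exp (k / y)) - q := by
    filter_upwards [isOpen_ne.mem_nhds hx] with y hy
    simpa using (((hasDerivAt_mul_exp_div k hy).const_mul p).fun_sub
      ((hasDerivAt_id' y).const_mul q)).deriv
  rw [hderiv.deriv_eq]
  exact (((hasDerivAt_one_sub_div_mul_exp_div k hx).const_mul p).sub_const q).deriv

lemma rpow_div_mul_self_eq_mul_exp {b : ℝ} (hb : 0 < b) (T c : ℝ) {x : ℝ} (hc : c ≠ 0)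
    (hx : x ≠ 0) :
    b ^ ((T - x) / (c * x)) = b ^ (-1 / c) * exp (T * log b / c / x) := by
  rw [rpow_def_of_pos hb, rpow_def_of_pos hb, ← exp_add]
  congr 1
  field_simp
  ring

theorem transmission_energy_second_derivative_general
    (N0 B R β h η T : ℝ)
    (hN0 : 0 < N0) (hB : 0 < B) (hR : 0 < R) (hβ : 0 < β)
    (hh : 0 < h) (hη : 0 < η) :
    ∀ t ∈ Ioo 0 T,
      deriv (deriv (fun s : ℝ =>
          (s / (η * h ^ 2)) * (N0 * ((2 : ℝ) ^ ((T - s) / (B * R * β * s)) - 1)))) t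
        = N0 * (T * Real.log 2) ^ 2 / (η * (h * B * R * β) ^ 2 * t ^ 3) *
            (2 : ℝ) ^ ((T - t) / (B * R * β * t)) ∧
      0 < deriv (deriv (fun s : ℝ =>
          (s / (η * h ^ 2)) * (N0 * ((2 : ℝ) ^ ((T - s) / (B * R * β * s)) - 1)))) t := by
  rintro t ⟨ht0, htT⟩
  have hc : B * R * β ≠ 0 := by positivity
  have hsplit : (fun s : ℝ =>
        (s / (η * h ^ 2)) * (N0 * ((2 : ℝ) ^ ((T - s) / (B * R * β * s)) - 1)))
      = fun s => N0 / (η * h ^ 2) * 2 ^ (-1 / (B * R * β)) *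
          (s * exp (T * log 2 / (B * R * β) / s)) - N0 / (η * h ^ 2) * s := by
    funext s
    rcases eq_or_ne s 0 with rfl | hs
    · simp
    · rw [rpow_div_mul_self_eq_mul_exp two_pos T _ hc hs]
      ring
  have hsecond : deriv (deriv (fun s : ℝ =>
        (s / (η * h ^ 2)) * (N0 * ((2 : ℝ) ^ ((T - s) / (B * R * β * s)) - 1)))) t
      = N0 * (T * Real.log 2) ^ 2 / (η * (h * B * R * β) ^ 2 * t ^ 3) *
          (2 : ℝ) ^ ((T - t) / (B * R * β * t)) := by
    rw [hsplit, deriv_deriv_mul_exp_div_sub _ _ _ ht0.ne',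
      rpow_div_mul_self_eq_mul_exp two_pos T _ hc ht0.ne']
    field_simp
  have hT : 0 < T := ht0.trans htT
  exact ⟨hsecond, hsecond ▸ by positivity⟩

/-- The second derivative of the transmission-energy function
`t ↦ (t/(η h²)) N₀ (2^{(T−t)/(B R β t)} − 1)` equals
`N₀ (T ln 2)²/(η (h B R β)² t³) · 2^{(T−t)/(B R β t)}` on `(0, T)`;
in particular it is strictly positive there. -/
theorem transmission_energy_second_derivative
    (N0 B R β h η T : ℝ)
    (hN0 : 0 < N0) (hB : 0 < B) (hR : 0 < R) (hβ : 0 < β)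
    (hh : 0 < h) (hη : 0 < η) (hT : 0 < T) :
    ∀ t ∈ Ioo 0 T,
      deriv (deriv (fun s : ℝ =>
          (s / (η * h ^ 2)) * (N0 * ((2 : ℝ) ^ ((T - s) / (B * R * β * s)) - 1)))) t
        = N0 * (T * Real.log 2) ^ 2 / (η * (h * B * R * β) ^ 2 * t ^ 3) *
            (2 : ℝ) ^ ((T - t) / (B * R * β * t)) ∧
      0 < deriv (deriv (fun s : ℝ =>
          (s / (η * h ^ 2)) * (N0 * ((2 : ℝ) ^ ((T - s) / (B * R * β * s)) - 1)))) t :=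
  transmission_energy_second_derivative_general N0 B R β h η T hN0 hB hR hβ hh hη
end

section
/- Define d(R) = T/ℓ − 1/s − C(R,ε)/f_cpu and φ(R) = (1/f_cpu)·g(1/(d(R)·R)) + (1/(R²·ε·e^{εR}))·f′(1/(d(R)·R)), where g(x) = f(x) − x·f′(x) and f′(x) = (N₀·ln 2/B)·2^{x/B}, and suppose d(R) > 0 for all R ∈ [1, R_max]. If two sensors have the same channel gain h > 0 but per-cycle compression energies q₁ ≥ q₂ > 0, and their compression ratios R₁, R₂ ∈ [1, R_max] satisfy φ(R₁) = q₁·h and φ(R₂) = q₂·h, then R₁ ≤ R₂. -/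
/-!
Write `x(R) = 1/(d(R) R)` and `a(R) = 1/(R² C'(R))`, so that `φ = g(x)/f_cpu + a f'(x)`.
Since `g' = -x f''` and `f'' = (ln 2/B) f'`, the chain rule gives
`φ' = f'(x) ((ln 2/B) x' (a - x/f_cpu) + a')`. As `d' = -C'/f_cpu`, the product
`x' (a - x/f_cpu)` is the nonpositive quantity `-(f_cpu d - R C')² / (f_cpu² d³ R⁴ C')`, and
`a' < 0` because `R² C'(R)` increases. So `φ` is strictly decreasing on `[1, R_max]`, and
`φ(R₁) = q₁ h ≥ q₂ h = φ(R₂)` forces `R₁ ≤ R₂`.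
-/

open Real Set

noncomputable section

def txPower (N0 B x : ℝ) : ℝ := N0 * ((2 : ℝ) ^ (x / B) - 1)

def txPowerDeriv (N0 B x : ℝ) : ℝ := N0 * Real.log 2 / B * (2 : ℝ) ^ (x / B)

def txPowerIntercept (N0 B x : ℝ) : ℝ := txPower N0 B x - x * txPowerDeriv N0 B x

def optimalityLhs (N0 B c ε : ℝ) (d : ℝ → ℝ) (R : ℝ) : ℝ :=
  1 / c * txPowerIntercept N0 B (1 / (d R * R))
    + 1 / (R ^ 2 * ε * exp (ε * R)) * txPowerDeriv N0 B (1 / (d R * R))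

end

section TxPower

variable (N0 B x : ℝ)

theorem hasDerivAt_two_rpow_div :
    HasDerivAt (fun x => (2 : ℝ) ^ (x / B)) (Real.log 2 / B * (2 : ℝ) ^ (x / B)) x :=
  (((hasDerivAt_id' x).div_const B).const_rpow two_pos).congr_deriv (by ring)

theorem hasDerivAt_txPower : HasDerivAt (txPower N0 B) (txPowerDeriv N0 B x) x :=
  (((hasDerivAt_two_rpow_div B x).sub_const 1).const_mul N0).congr_deriv
    (by unfold txPowerDeriv; ring)

theorem hasDerivAt_txPowerDeriv :
    HasDerivAt (txPowerDeriv N0 B) (Real.log 2 / B * txPowerDeriv N0 B x) x :=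
  ((hasDerivAt_two_rpow_div B x).const_mul (N0 * Real.log 2 / B)).congr_deriv
    (by unfold txPowerDeriv; ring)

theorem hasDerivAt_txPowerIntercept :
    HasDerivAt (txPowerIntercept N0 B) (-(x * (Real.log 2 / B * txPowerDeriv N0 B x))) x :=
  ((hasDerivAt_txPower N0 B x).sub
    ((hasDerivAt_id' x).mul (hasDerivAt_txPowerDeriv N0 B x))).congr_deriv (by ring)

variable {N0 B} in
theorem txPowerDeriv_pos (hN0 : 0 < N0) (hB : 0 < B) : 0 < txPowerDeriv N0 B x := by
  have := Real.log_pos one_lt_two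
  unfold txPowerDeriv
  positivity

end TxPower

theorem hasDerivAt_one_div_sq_mul_exp {ε R : ℝ} (hε : ε ≠ 0) (hR : R ≠ 0) :
    HasDerivAt (fun R => 1 / (R ^ 2 * ε * exp (ε * R)))
      (-((2 + ε * R) / (R ^ 3 * ε * exp (ε * R)))) R := by
  have hexp : HasDerivAt (fun R => exp (ε * R)) (exp (ε * R) * ε) R := by
    simpa using ((hasDerivAt_id R).const_mul ε).exp
  have hden : HasDerivAt (fun R => R ^ 2 * ε * exp (ε * R))
      (2 * R * ε * exp (ε * R) + R ^ 2 * ε * (exp (ε * R) * ε)) R :=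
    (((hasDerivAt_pow 2 R).mul_const ε).mul hexp).congr_deriv (by push_cast; ring)
  simp only [one_div]
  refine (hden.inv (by positivity)).congr_deriv ?_
  field_simp

theorem hasDerivAt_intercept_add_mul_deriv {N0 B c : ℝ} {u a : ℝ → ℝ} {u' a' y : ℝ}
    (hu : HasDerivAt u u' y) (ha : HasDerivAt a a' y) :
    HasDerivAt (fun R => 1 / c * txPowerIntercept N0 B (u R) + a R * txPowerDeriv N0 B (u R))
      (txPowerDeriv N0 B (u y) * (Real.log 2 / B * (u' * (a y - u y / c)) + a')) y :=
  ((((hasDerivAt_txPowerIntercept N0 B (u y)).comp y hu).const_mul (1 / c)).add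
    (ha.mul ((hasDerivAt_txPowerDeriv N0 B (u y)).comp y hu))).congr_deriv
    (by rw [Function.comp_apply]; ring)

section OptimalityLhs

variable {N0 B c ε : ℝ} {d : ℝ → ℝ}

theorem exists_hasDerivAt_optimalityLhs_neg (hN0 : 0 < N0) (hB : 0 < B) (hc : 0 < c)
    (hε : 0 < ε) {R : ℝ} (hR : 0 < R) (hdR : 0 < d R)
    (hd : HasDerivAt d (-(ε * exp (ε * R) / c)) R) :
    ∃ φ' < 0, HasDerivAt (optimalityLhs N0 B c ε d) φ' R := by
  have hdR' : HasDerivAt (fun R => d R * R) (-(ε * exp (ε * R) / c) * R + d R) R :=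
    (hd.mul (hasDerivAt_id' R)).congr_deriv (by ring)
  have hu : HasDerivAt (fun R => 1 / (d R * R))
      (-(-(ε * exp (ε * R) / c) * R + d R) / (d R * R) ^ 2) R := by
    simp only [one_div]
    exact hdR'.inv (by positivity)
  refine ⟨_, ?_, hasDerivAt_intercept_add_mul_deriv hu
    (hasDerivAt_one_div_sq_mul_exp hε.ne' hR.ne')⟩
  have hsq : -(-(ε * exp (ε * R) / c) * R + d R) / (d R * R) ^ 2
      * (1 / (R ^ 2 * ε * exp (ε * R)) - 1 / (d R * R) / c)
      = -((c * d R - R * ε * exp (ε * R)) ^ 2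
        / (c ^ 2 * d R ^ 3 * R ^ 4 * (ε * exp (ε * R)))) := by
    field_simp
    ring
  rw [hsq]
  have := Real.log_pos one_lt_two
  have hsq_nonneg : 0 ≤ Real.log 2 / B * ((c * d R - R * ε * exp (ε * R)) ^ 2
      / (c ^ 2 * d R ^ 3 * R ^ 4 * (ε * exp (ε * R)))) := by positivity
  have hneg_a' : 0 < (2 + ε * R) / (R ^ 3 * ε * exp (ε * R)) := by positivity
  exact mul_neg_of_pos_of_neg (txPowerDeriv_pos _ hN0 hB) (by linarith)

theorem strictAntiOn_optimalityLhs (hN0 : 0 < N0) (hB : 0 < B) (hc : 0 < c) (hε : 0 < ε)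
    {s : Set ℝ} (hs : Convex ℝ s) (hpos : ∀ R ∈ s, 0 < R ∧ 0 < d R)
    (hd : ∀ R ∈ s, HasDerivAt d (-(ε * exp (ε * R) / c)) R) :
    StrictAntiOn (optimalityLhs N0 B c ε d) s := by
  choose! φ' hφ'_neg hφ' using fun R hR =>
    exists_hasDerivAt_optimalityLhs_neg hN0 hB hc hε (hpos R hR).1 (hpos R hR).2 (hd R hR)
  refine strictAntiOn_of_deriv_neg hs
    (fun R hR => (hφ' R hR).continuousAt.continuousWithinAt) fun R hR => ?_
  rw [(hφ' R (interior_subset hR)).deriv]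
  exact hφ'_neg R (interior_subset hR)

end OptimalityLhs

theorem compression_energy_monotone_compression_general
    (N0 B fcpu s T ℓ ε Rmax : ℝ)
    (hN0 : 0 < N0) (hB : 0 < B)
    (hfcpu : 0 < fcpu)
    (hε : 0 < ε)
    (f' g d φ : ℝ → ℝ)
    (hf' : ∀ x, f' x = N0 * Real.log 2 / B * (2 : ℝ) ^ (x / B))
    (hg : ∀ x, g x = N0 * ((2 : ℝ) ^ (x / B) - 1) - x * f' x)
    (hd : ∀ R, d R = T / ℓ - 1 / s - (Real.exp (ε * R) - Real.exp ε) / fcpu)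
    (hφ : ∀ R, φ R =
      (1 / fcpu) * g (1 / (d R * R))
        + (1 / (R ^ 2 * ε * Real.exp (ε * R))) * f' (1 / (d R * R)))
    (hdpos : ∀ R ∈ Icc 1 Rmax, 0 < d R)
    (h q₁ q₂ R₁ R₂ : ℝ)
    (hh : 0 < h) (hq : q₁ ≥ q₂)
    (hR₁ : R₁ ∈ Icc 1 Rmax) (hR₂ : R₂ ∈ Icc 1 Rmax)
    (hopt₁ : φ R₁ = q₁ * h) (hopt₂ : φ R₂ = q₂ * h) :
    R₁ ≤ R₂ := by
  obtain rfl : f' = txPowerDeriv N0 B := funext hf'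
  obtain rfl : g = txPowerIntercept N0 B := funext hg
  obtain rfl : φ = optimalityLhs N0 B fcpu ε d := funext hφ
  have hd' (R : ℝ) : HasDerivAt d (-(ε * exp (ε * R) / fcpu)) R := by
    rw [funext hd]
    exact (((((hasDerivAt_id' R).const_mul ε).exp.sub_const (exp ε)).div_const fcpu).const_sub
      (T / ℓ - 1 / s)).congr_deriv (by ring)
  have hanti : StrictAntiOn (optimalityLhs N0 B fcpu ε d) (Icc 1 Rmax) :=
    strictAntiOn_optimalityLhs hN0 hB hfcpu hε (convex_Icc 1 Rmax)
      (fun R hR => ⟨one_pos.trans_le hR.1, hdpos R hR⟩) fun R _ => hd' R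
  rw [← hanti.le_iff_ge hR₂ hR₁, hopt₁, hopt₂]
  exact mul_le_mul_of_nonneg_right hq hh.le

/-- If two sensors share the channel gain `h > 0` but have per-cycle
compression energies `q₁ ≥ q₂ > 0`, and their compression ratios satisfy the
first-order optimality condition `φ(Rᵢ) = qᵢ h` of Problem P1-B, then
`R₁ ≤ R₂`.  Here `f(x) = N₀(2^{x/B}−1)`, `f′(x) = (N₀ ln 2/B) 2^{x/B}`,
`g(x) = f(x) − x f′(x)`, `C(R,ε) = e^{εR} − e^{ε}`, and
`d(R) = T/ℓ − 1/s − C(R,ε)/f_cpu` is assumed positive on `[1, R_max]`. -/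
theorem compression_energy_monotone_compression
    (N0 B fcpu s T ℓ ε Rmax : ℝ)
    (hN0 : 0 < N0) (hB : 0 < B)
    (hfcpu : 0 < fcpu) (hs : 0 < s) (hT : 0 < T) (hℓ : 0 < ℓ)
    (hε : 0 < ε) (hRmax : 1 ≤ Rmax)
    (f' g d φ : ℝ → ℝ)
    (hf' : ∀ x, f' x = N0 * Real.log 2 / B * (2 : ℝ) ^ (x / B))
    (hg : ∀ x, g x = N0 * ((2 : ℝ) ^ (x / B) - 1) - x * f' x)
    (hd : ∀ R, d R = T / ℓ - 1 / s - (Real.exp (ε * R) - Real.exp ε) / fcpu)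
    (hφ : ∀ R, φ R =
      (1 / fcpu) * g (1 / (d R * R))
        + (1 / (R ^ 2 * ε * Real.exp (ε * R))) * f' (1 / (d R * R)))
    (hdpos : ∀ R ∈ Icc 1 Rmax, 0 < d R)
    (h q₁ q₂ R₁ R₂ : ℝ)
    (hh : 0 < h) (hq₂ : 0 < q₂) (hq : q₁ ≥ q₂)
    (hR₁ : R₁ ∈ Icc 1 Rmax) (hR₂ : R₂ ∈ Icc 1 Rmax)
    (hopt₁ : φ R₁ = q₁ * h) (hopt₂ : φ R₂ = q₂ * h) :
    R₁ ≤ R₂ :=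
  compression_energy_monotone_compression_general N0 B fcpu s T ℓ ε Rmax hN0 hB hfcpu hε f' g d φ
    hf' hg hd hφ hdpos h q₁ q₂ R₁ R₂ hh hq hR₁ hR₂ hopt₁ hopt₂
end
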